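/- arXiv:0706.1123 — 2 statements merged into one kernel-verified Lean document; each statement's English description precedes it below -/
import Mathlib

section
/- If h : X → Y is an η-quasisymmetric homeomorphism between metric spaces and S is a quasipacking of X with constant K, then the image cover {h(s) : s ∈ S} is a quasipacking of Y with constant depending only on K and η. (Simplified version: the property that a cover admits, for each element s, nested balls B(x_s,r_s) ⊆ s ⊆ B(x_s,K r_s) with the inner balls pairwise disjoint, is preserved under quasisymmetric maps with a new constant K' = K'(K,η).) -/
open Metric

/-- `S` is a quasipacking of `X` with constant `K`: it is a cover such that each element
`s` contains a ball `B(c s, r s)` and is contained in `B(c s, K · r s)`, the inner balls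
being pairwise disjoint. -/
def IsQuasipacking {X : Type*} [MetricSpace X] (S : Set (Set X)) (K : ℝ) : Prop :=
  (∀ x : X, ∃ s ∈ S, x ∈ s) ∧
  ∃ (c : Set X → X) (r : Set X → ℝ),
    (∀ s ∈ S, 0 < r s ∧ ball (c s) (r s) ⊆ s ∧ s ⊆ ball (c s) (K * r s)) ∧
    (∀ s ∈ S, ∀ t ∈ S, s ≠ t → Disjoint (ball (c s) (r s)) (ball (c t) (r t)))

/-! The inner radius of `h(s)` is the distance from `h(c)` to the image of the complement of
`B(c, r)`. Every point of `s` is at distance `< K r` from `c`, while every point outside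
`B(c, r)` is at distance `≥ r`, so quasisymmetry bounds `h(s)` by `η(K)` times that inner radius.
When `B(c, r)` is all of `X`, the space is bounded, hence so is its image, and a ball containing
the whole image will do. -/

section Quasisymmetric

variable {X Y : Type*} [MetricSpace X] [MetricSpace Y]

def IsQuasisymmetric (η : ℝ → ℝ) (h : X → Y) : Prop :=
  ∀ (x a b : X) (t : ℝ), 0 ≤ t → dist x a ≤ t * dist x b →
    dist (h x) (h a) ≤ η t * dist (h x) (h b)

namespace IsQuasisymmetric

variable {η : ℝ → ℝ} {h : X → Y}

theorem isBounded_image (hh : IsQuasisymmetric η h) {s : Set X} (hs : Bornology.IsBounded s) :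
    Bornology.IsBounded (h '' s) := by
  rcases s.eq_empty_or_nonempty with rfl | ⟨x, -⟩
  · simp
  rcases subsingleton_or_nontrivial X with _ | _
  · exact (Set.subsingleton_of_subsingleton.image h).finite.isBounded
  obtain ⟨b, hb⟩ := exists_ne x
  have hxb : 0 < dist x b := dist_pos.2 hb.symm
  obtain ⟨R, hR, hsR⟩ := hs.subset_closedBall_lt 0 x
  refine (isBounded_closedBall (x := h x) (r := η (R / dist x b) * dist (h x) (h b))).subset ?_
  rintro _ ⟨a, ha, rfl⟩
  rw [mem_closedBall, dist_comm]
  refine hh x a b _ (by positivity) ?_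
  rw [div_mul_cancel₀ _ hxb.ne']
  simpa [dist_comm] using hsR ha

theorem infDist_image_compl_ball_pos (hh : IsQuasisymmetric η h) (hinj : Function.Injective h)
    (hηpos : ∀ t, 0 < t → 0 < η t) {x b : X} {r : ℝ} (hr : 0 < r) (hb : b ∉ ball x r) :
    0 < infDist (h x) (h '' (ball x r)ᶜ) := by
  have hne : (h '' (ball x r)ᶜ).Nonempty := ⟨h b, b, hb, rfl⟩
  rw [mem_ball, not_lt, dist_comm] at hb
  have hxb : 0 < dist x b := hr.trans_le hb
  have ht : 0 < dist x b / r := div_pos hxb hr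
  refine lt_of_lt_of_le (div_pos (dist_pos.2 (hinj.ne (dist_pos.1 hxb))) (hηpos _ ht))
    ((le_infDist hne).2 ?_)
  rintro _ ⟨a, ha, rfl⟩
  rw [Set.mem_compl_iff, mem_ball, not_lt, dist_comm] at ha
  rw [div_le_iff₀ (hηpos _ ht), mul_comm]
  refine hh x b a _ ht.le ?_
  rw [div_mul_eq_mul_div, le_div_iff₀ hr]
  exact mul_le_mul_of_nonneg_left ha hxb.le

theorem dist_le_mul_infDist_image_compl_ball (hh : IsQuasisymmetric η h) {K r : ℝ} (hK : 0 ≤ K)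
    (hηK : 0 < η K) {x a : X} (hne : (ball x r)ᶜ.Nonempty) (ha : a ∈ ball x (K * r)) :
    dist (h x) (h a) ≤ η K * infDist (h x) (h '' (ball x r)ᶜ) := by
  rw [← div_le_iff₀' hηK, le_infDist (hne.image h)]
  rintro _ ⟨b, hb, rfl⟩
  rw [Set.mem_compl_iff, mem_ball, not_lt, dist_comm] at hb
  rw [mem_ball, dist_comm] at ha
  rw [div_le_iff₀' hηK]
  exact hh x a b K hK (ha.le.trans (mul_le_mul_of_nonneg_left hb hK))

theorem exists_ball_subset_image_ball (hh : IsQuasisymmetric η h) (hbij : Function.Bijective h)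
    (hηpos : ∀ t, 0 < t → 0 < η t) {K : ℝ} (hK : 0 < K) (x : X) {r : ℝ} (hr : 0 < r) :
    ∃ ρ > 0, ball (h x) ρ ⊆ h '' ball x r ∧
      h '' ball x (K * r) ⊆ ball (h x) ((η K + 1) * ρ) := by
  rcases (ball x r)ᶜ.eq_empty_or_nonempty with hball | ⟨b, hb⟩
  · rw [Set.compl_empty_iff] at hball
    have hY : Bornology.IsBounded (Set.univ : Set Y) := by
      simpa [hball, hbij.2.range_eq] using hh.isBounded_image (isBounded_ball (x := x) (r := r))
    obtain ⟨R, hR, hsub⟩ := hY.subset_ball_lt 0 (h x)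
    rw [hball, Set.image_univ, hbij.2.range_eq]
    refine ⟨R, hR, Set.subset_univ _, (Set.subset_univ _).trans (hsub.trans ?_)⟩
    exact ball_subset_ball (le_mul_of_one_le_left hR.le (by linarith [hηpos K hK]))
  · have hρ := hh.infDist_image_compl_ball_pos hbij.1 hηpos hr hb
    refine ⟨_, hρ, ?_, ?_⟩
    · rw [Set.image_compl_eq hbij]
      exact ball_infDist_compl_subset
    · rintro _ ⟨a, ha, rfl⟩
      rw [mem_ball, dist_comm]
      calc dist (h x) (h a) ≤ η K * infDist (h x) (h '' (ball x r)ᶜ) :=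
            hh.dist_le_mul_infDist_image_compl_ball hK.le (hηpos K hK) ⟨b, hb⟩ ha
        _ < (η K + 1) * infDist (h x) (h '' (ball x r)ᶜ) := by linarith

end IsQuasisymmetric

end Quasisymmetric

theorem quasipacking_image_general {X Y : Type*} [MetricSpace X] [MetricSpace Y]
    (h : X → Y) (hbij : Function.Bijective h)
    (η : ℝ → ℝ) (hη0 : η 0 = 0)
    (hηmono : StrictMonoOn η (Set.Ici 0))
    (hqs : ∀ (x a b : X) (t : ℝ), 0 ≤ t → dist x a ≤ t * dist x b →
      dist (h x) (h a) ≤ η t * dist (h x) (h b))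
    (S : Set (Set X)) (K : ℝ) (hK : 1 ≤ K) (hS : IsQuasipacking S K) :
    ∃ K' : ℝ, 1 ≤ K' ∧ IsQuasipacking ((fun s => h '' s) '' S) K' := by
  obtain ⟨hcover, c, r, hcr, hdisj⟩ := hS
  have hηpos : ∀ t, 0 < t → 0 < η t := fun t ht =>
    hη0 ▸ hηmono (Set.mem_Ici.2 le_rfl) ht.le ht
  choose! ρ hρpos hρin hρout using fun s (hs : s ∈ S) =>
    IsQuasisymmetric.exists_ball_subset_image_ball hqs hbij hηpos (by linarith) (c s) (hcr s hs).1
  set p := Function.invFun (fun s : Set X => h '' s)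
  have hp : ∀ s, p (h '' s) = s := Function.leftInverse_invFun (Set.image_injective.2 hbij.1)
  refine ⟨η K + 1, by linarith [hηpos K (by linarith)], ?_,
    fun T => h (c (p T)), fun T => ρ (p T), ?_, ?_⟩
  · intro y
    obtain ⟨x, rfl⟩ := hbij.2 y
    obtain ⟨s, hs, hx⟩ := hcover x
    exact ⟨_, ⟨s, hs, rfl⟩, x, hx, rfl⟩
  · rintro _ ⟨s, hs, rfl⟩
    simp only [hp]
    exact ⟨hρpos s hs, (hρin s hs).trans (Set.image_mono (hcr s hs).2.1),
      (Set.image_mono (hcr s hs).2.2).trans (hρout s hs)⟩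
  · rintro _ ⟨s, hs, rfl⟩ _ ⟨t, ht, rfl⟩ hst
    simp only [hp]
    exact (Set.disjoint_image_of_injective hbij.1
      (hdisj s hs t ht (ne_of_apply_ne _ hst))).mono (hρin s hs) (hρin t ht)

/-- The image of a quasipacking under an `η`-quasisymmetric homeomorphism is a
quasipacking, with a constant depending only on `K` and `η`. -/
theorem quasipacking_image {X Y : Type*} [MetricSpace X] [MetricSpace Y]
    (h : X → Y) (hbij : Function.Bijective h)
    (η : ℝ → ℝ) (hη0 : η 0 = 0) (hηcont : ContinuousOn η (Set.Ici 0))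
    (hηmono : StrictMonoOn η (Set.Ici 0))
    (hηsurj : Set.Ici (0 : ℝ) ⊆ η '' Set.Ici 0)
    (hqs : ∀ (x a b : X) (t : ℝ), 0 ≤ t → dist x a ≤ t * dist x b →
      dist (h x) (h a) ≤ η t * dist (h x) (h b))
    (S : Set (Set X)) (K : ℝ) (hK : 1 ≤ K) (hS : IsQuasipacking S K) :
    ∃ K' : ℝ, 1 ≤ K' ∧ IsQuasipacking ((fun s => h '' s) '' S) K' :=
  quasipacking_image_general h hbij η hη0 hηmono hqs S K hK hS
end

section
/- Let f : A' → A be a covering map of degree d between sets, inducing a d-to-1 correspondence of cover elements: S' is a cover of A' such that each s ∈ S (a finite cover of A) has exactly d preimage components, each mapped bijectively onto s, and each curve γ ∈ Γ has connected preimage γ' meeting exactly the preimages of the elements meeting γ, with each such preimage counted d times in ℓ. Under these combinatorial hypotheses, the pullback weight ρ' = ρ∘f of an admissible metric ρ satisfies V_{ρ'}(A') = d·V_ρ(A) and ℓ_{ρ'}(γ') = d·ℓ_ρ(γ), and consequently mod_Q(Γ', ρ', S') = d^{1-Q}·mod_Q(Γ, ρ, S) for Q > 1. -/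
open scoped ENNReal BigOperators Classical

/-- The `ρ`-length of a set `K`: the sum of `ρ(s)` over the elements of the cover `S`
meeting `K`. -/
noncomputable def rhoLength {X : Type*} (S : Finset (Set X)) (ρ : Set X → ℝ≥0∞)
    (K : Set X) : ℝ≥0∞ :=
  ∑ s ∈ S, if (s ∩ K).Nonempty then ρ s else 0

/-- The minimal `ρ`-length of curves of the family `Γ`. -/
noncomputable def minLength {X : Type*} (S : Finset (Set X)) (ρ : Set X → ℝ≥0∞)
    (Γ : Set (Set X)) : ℝ≥0∞ :=
  ⨅ γ ∈ Γ, rhoLength S ρ γ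

/-- The total `ρ`-volume `Σ_{s∈S} ρ(s)^Q`. -/
noncomputable def rhoVolume {X : Type*} (S : Finset (Set X)) (ρ : Set X → ℝ≥0∞)
    (Q : ℝ) : ℝ≥0∞ :=
  ∑ s ∈ S, ρ s ^ Q

/-- `ρ` is admissible if `0 < Σ ρ(s)^Q < ∞`. -/
def Admissible {X : Type*} (S : Finset (Set X)) (ρ : Set X → ℝ≥0∞) (Q : ℝ) : Prop :=
  0 < rhoVolume S ρ Q ∧ rhoVolume S ρ Q < ⊤

/-- Naturality of combinatorial modulus under coverings (combinatorial form).
Let `F` map each element of the cover `S'` of `A'` to its image in the cover `S` of `A`,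
each `s ∈ S` having exactly `d` preimage components in `S'`, and let `g` map each curve
`γ' ∈ Γ'` to its image curve in `Γ`, with `g '' Γ' = Γ`, such that an element `s' ∈ S'`
meets `γ'` exactly when its image `F s'` meets `g γ'`.  Then for the pullback weight
`ρ' = ρ ∘ F` of an admissible `ρ` one has `V_{ρ'}(A') = d·V_ρ(A)`,
`ℓ_{ρ'}(γ') = d·ℓ_ρ(g γ')`, and consequently
`mod_Q(Γ', ρ', S') = d^(1-Q) · mod_Q(Γ, ρ, S)` for `Q > 1`. -/
theorem combMod_covering {X X' : Type*}
    (S : Finset (Set X)) (S' : Finset (Set X')) (d : ℕ) (hd : 1 ≤ d)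
    (F : Set X' → Set X) (hF : ∀ s' ∈ S', F s' ∈ S)
    (hcard : ∀ s ∈ S, (S'.filter (fun s' => F s' = s)).card = d)
    (Γ : Set (Set X)) (Γ' : Set (Set X')) (g : Set X' → Set X)
    (hg : g '' Γ' = Γ)
    (hmeet : ∀ γ' ∈ Γ', ∀ s' ∈ S', ((s' ∩ γ').Nonempty ↔ ((F s') ∩ (g γ')).Nonempty))
    (Q : ℝ) (hQ : 1 < Q)
    (ρ : Set X → ℝ≥0∞) (hρ : Admissible S ρ Q) :
    rhoVolume S' (ρ ∘ F) Q = (d : ℝ≥0∞) * rhoVolume S ρ Q ∧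
    (∀ γ' ∈ Γ', rhoLength S' (ρ ∘ F) γ' = (d : ℝ≥0∞) * rhoLength S ρ (g γ')) ∧
    rhoVolume S' (ρ ∘ F) Q / (minLength S' (ρ ∘ F) Γ') ^ Q
      = (d : ℝ≥0∞) ^ (1 - Q) * (rhoVolume S ρ Q / (minLength S ρ Γ) ^ Q) := by

  have hdne : (d : ℝ≥0∞) ≠ 0 := by
    exact_mod_cast Nat.one_le_iff_ne_zero.mp hd
  have hdnt : (d : ℝ≥0∞) ≠ ⊤ := ENNReal.natCast_ne_top d
  have hQ0 : (0:ℝ) ≤ Q := le_of_lt (lt_trans one_pos hQ)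
  have key : ∀ φ : Set X → ℝ≥0∞, ∑ s' ∈ S', φ (F s') = (d : ℝ≥0∞) * ∑ s ∈ S, φ s := by
    intro φ
    rw [← Finset.sum_fiberwise_of_maps_to hF (fun s' => φ (F s')), Finset.mul_sum]
    refine Finset.sum_congr rfl fun s hs => ?_
    rw [Finset.sum_congr rfl (fun s' hs' => ?_), Finset.sum_const, hcard s hs,
      nsmul_eq_mul]
    · rw [(Finset.mem_filter.mp hs').2]
  have hvol : rhoVolume S' (ρ ∘ F) Q = (d : ℝ≥0∞) * rhoVolume S ρ Q :=
    key (fun s => ρ s ^ Q)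
  have hlen : ∀ γ' ∈ Γ', rhoLength S' (ρ ∘ F) γ' = (d : ℝ≥0∞) * rhoLength S ρ (g γ') := by
    intro γ' hγ'
    have : rhoLength S' (ρ ∘ F) γ'
        = ∑ s' ∈ S', (fun s => if (s ∩ g γ').Nonempty then ρ s else 0) (F s') :=
      Finset.sum_congr rfl fun s' hs' => by
        simp only [Function.comp]
        rw [hmeet γ' hγ' s' hs']
    rw [this]
    exact key (fun s => if (s ∩ g γ').Nonempty then ρ s else 0)
  refine ⟨hvol, hlen, ?_⟩
  have hmin : minLength S' (ρ ∘ F) Γ' = (d : ℝ≥0∞) * minLength S ρ Γ := by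
    unfold minLength
    rw [← hg, iInf_image]
    rw [ENNReal.mul_iInf_of_ne hdne hdnt]
    refine iInf_congr fun γ' => ?_
    rw [ENNReal.mul_iInf_of_ne hdne hdnt]
    exact iInf_congr fun h => hlen γ' h
  rw [hvol, hmin, ENNReal.mul_rpow_of_nonneg _ _ hQ0,
    ENNReal.rpow_sub 1 Q hdne hdnt, ENNReal.rpow_one]
  have h1 : ((d:ℝ≥0∞) ^ Q) ≠ 0 := by
    simp [ENNReal.rpow_eq_zero_iff, hdne, hdnt]
  have h2 : ((d:ℝ≥0∞) ^ Q) ≠ ⊤ := ENNReal.rpow_ne_top_of_nonneg hQ0 hdnt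
  rw [div_eq_mul_inv, div_eq_mul_inv, div_eq_mul_inv,
    ENNReal.mul_inv (Or.inl h1) (Or.inl h2)]
  ring
end
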